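/- Maximum-propagation step: suppose x_0 is an interior vertex, u^{l_0}(x_0) > 0, and û^{l_0}(x_0) - v̂^{l_0}(x_0) = max_{x∈V}(û^{l_0}(x) - v̂^{l_0}(x)) > 0 for two solutions u, v of the system. Then 0 < û^{l_0}(x_0) - v̂^{l_0}(x_0) ≤ (1/deg(x_0)) Σ_{(x_0,y)∈E} (û^{l_0}(y) - v̂^{l_0}(y)), and hence û^{l_0}(y) - v̂^{l_0}(y) = û^{l_0}(x_0) - v̂^{l_0}(x_0) for every neighbor y of x_0. -/
import Mathlib


open Finset

noncomputable def nbrAvg {V : Type*} [Fintype V] (G : SimpleGraph V) [DecidableRel G.Adj]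
    (u : V → ℝ) (x : V) : ℝ :=
  (∑ y ∈ G.neighborFinset x, u y) / (G.degree x)

def hatFn {V : Type*} {m : ℕ} (u : Fin m → V → ℝ) (l : Fin m) (x : V) : ℝ :=
  u l x - ∑ p ∈ Finset.univ.erase l, u p x

/-- `u` is a (nonnegative) solution of the discrete system with boundary set `Bd`,
nonlinearities `H`, `f`, and boundary data `φ`. -/
def IsSol {V : Type*} {m : ℕ} [Fintype V] (G : SimpleGraph V) [DecidableRel G.Adj]
    (Bd : Set V) (H : V → ℝ → ℝ) (f : Fin m → V → ℝ → ℝ) (φ : Fin m → V → ℝ)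
    (u : Fin m → V → ℝ) : Prop :=
  (∀ l x, 0 ≤ u l x) ∧
  (∀ l x, x ∉ Bd → u l x =
      max (H x (nbrAvg G (u l) x - ∑ p ∈ Finset.univ.erase l, nbrAvg G (u p) x)
           - f l x (u l x)) 0) ∧
  (∀ l x, x ∈ Bd → u l x = φ l x)

section Aux

variable {V : Type*} {m : ℕ} [Fintype V] (G : SimpleGraph V) [DecidableRel G.Adj]

lemma nbrAvg_nonneg (u : V → ℝ) (hu : ∀ y, 0 ≤ u y) (x : V) : 0 ≤ nbrAvg G u x :=
  div_nonneg (Finset.sum_nonneg fun y _ => hu y) (Nat.cast_nonneg _)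

lemma nbrAvg_sub (u w : V → ℝ) (x : V) :
    nbrAvg G (fun y => u y - w y) x = nbrAvg G u x - nbrAvg G w x := by
  simp [nbrAvg, Finset.sum_sub_distrib, sub_div]

lemma nbrAvg_hat (u : Fin m → V → ℝ) (l : Fin m) (x : V) :
    nbrAvg G (hatFn u l) x
      = nbrAvg G (u l) x - ∑ p ∈ Finset.univ.erase l, nbrAvg G (u p) x := by
  simp only [nbrAvg, hatFn, Finset.sum_sub_distrib, sub_div, Finset.sum_div]
  rw [Finset.sum_comm]

lemma hatArg_add_nonpos (v : Fin m → V → ℝ) (hv : ∀ l x, 0 ≤ v l x)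
    (l p : Fin m) (hlp : l ≠ p) (x : V) :
    (nbrAvg G (v l) x - ∑ q ∈ Finset.univ.erase l, nbrAvg G (v q) x)
    + (nbrAvg G (v p) x - ∑ q ∈ Finset.univ.erase p, nbrAvg G (v q) x) ≤ 0 := by
  have h1 : nbrAvg G (v p) x ≤ ∑ q ∈ Finset.univ.erase l, nbrAvg G (v q) x :=
    Finset.single_le_sum (fun q _ => nbrAvg_nonneg G (v q) (fun y => hv q y) x)
      (by simp [Finset.mem_erase, hlp.symm])
  have h2 : nbrAvg G (v l) x ≤ ∑ q ∈ Finset.univ.erase p, nbrAvg G (v q) x :=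
    Finset.single_le_sum (fun q _ => nbrAvg_nonneg G (v q) (fun y => hv q y) x)
      (by simp [Finset.mem_erase, hlp])
  linarith

variable (Bd : Set V) (H : V → ℝ → ℝ) (f : Fin m → V → ℝ → ℝ) (φ : Fin m → V → ℝ)

/-- If a component is positive at an interior vertex, its argument is positive. -/
lemma sol_arg_pos (hHmono : ∀ x : V, Monotone (H x)) (hH0 : ∀ x, H x 0 = 0)
    (hfmono : ∀ l x, Monotone (f l x)) (hf0 : ∀ l x, f l x 0 = 0)
    (v : Fin m → V → ℝ) (hv : IsSol G Bd H f φ v)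
    (r : Fin m) (x : V) (hx : x ∉ Bd) (hr : 0 < v r x) :
    0 < nbrAvg G (v r) x - ∑ s ∈ Finset.univ.erase r, nbrAvg G (v s) x := by
  by_contra hA
  push_neg at hA
  have hH : H x (nbrAvg G (v r) x - ∑ s ∈ Finset.univ.erase r, nbrAvg G (v s) x) ≤ 0 := by
    have := hHmono x hA
    rwa [hH0 x] at this
  have hf : 0 ≤ f r x (v r x) := by
    have := hfmono r x (hv.1 r x); rwa [hf0 r x] at this
  have heq := hv.2.1 r x hx
  have : v r x = 0 := by
    rw [heq, max_eq_right]; linarith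
  linarith

/-- If a component is positive at an interior vertex, the equation holds without the max. -/
lemma sol_eq_pos (v : Fin m → V → ℝ) (hv : IsSol G Bd H f φ v)
    (r : Fin m) (x : V) (hx : x ∉ Bd) (hr : 0 < v r x) :
    v r x = H x (nbrAvg G (v r) x - ∑ s ∈ Finset.univ.erase r, nbrAvg G (v s) x)
      - f r x (v r x) := by
  have heq := hv.2.1 r x hx
  rcases le_or_gt (H x (nbrAvg G (v r) x - ∑ s ∈ Finset.univ.erase r, nbrAvg G (v s) x)
      - f r x (v r x)) 0 with h | h
  · rw [heq, max_eq_right h] at hr; exact absurd hr (lt_irrefl 0)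
  · conv_lhs => rw [heq, max_eq_left h.le]

/-- Components of a solution are pairwise disjoint. -/
lemma sol_disjoint (hHmono : ∀ x : V, Monotone (H x)) (hH0 : ∀ x, H x 0 = 0)
    (hfmono : ∀ l x, Monotone (f l x)) (hf0 : ∀ l x, f l x 0 = 0)
    (hφ : ∀ i j : Fin m, i ≠ j → ∀ x, φ i x * φ j x = 0)
    (v : Fin m → V → ℝ) (hv : IsSol G Bd H f φ v) :
    ∀ x (p q : Fin m), p ≠ q → v p x * v q x = 0 := by
  intro x p q hpq
  by_cases hxB : x ∈ Bd
  · rw [hv.2.2 p x hxB, hv.2.2 q x hxB]; exact hφ p q hpq x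
  · rcases eq_or_lt_of_le (hv.1 p x) with h | hp
    · rw [← h, zero_mul]
    rcases eq_or_lt_of_le (hv.1 q x) with h | hq
    · rw [← h, mul_zero]
    exfalso
    have hAp := sol_arg_pos G Bd H f φ hHmono hH0 hfmono hf0 v hv p x hxB hp
    have hAq := sol_arg_pos G Bd H f φ hHmono hH0 hfmono hf0 v hv q x hxB hq
    have := hatArg_add_nonpos G v hv.1 p q hpq x
    linarith

/-- Key lower bound: `H(Â) - f ≤ hat` for any solution at an interior vertex. -/
lemma sol_lower (hHmono : ∀ x : V, Monotone (H x)) (hH0 : ∀ x, H x 0 = 0)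
    (hHodd : ∀ x s, H x (-s) = -H x s)
    (hfmono : ∀ l x, Monotone (f l x)) (hf0 : ∀ l x, f l x 0 = 0)
    (hφ : ∀ i j : Fin m, i ≠ j → ∀ x, φ i x * φ j x = 0)
    (v : Fin m → V → ℝ) (hv : IsSol G Bd H f φ v)
    (l : Fin m) (x : V) (hx : x ∉ Bd) :
    H x (nbrAvg G (v l) x - ∑ p ∈ Finset.univ.erase l, nbrAvg G (v p) x)
      - f l x (v l x) ≤ hatFn v l x := by
  have hdisj := sol_disjoint G Bd H f φ hHmono hH0 hfmono hf0 hφ v hv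
  rcases eq_or_lt_of_le (hv.1 l x) with hl0 | hlpos
  · -- v l x = 0
    have hfl : f l x (v l x) = 0 := by rw [← hl0]; exact hf0 l x
    have hhat : hatFn v l x = -∑ p ∈ Finset.univ.erase l, v p x := by
      simp [hatFn, ← hl0]
    rw [hfl, sub_zero, hhat]
    by_cases hall : ∀ p ∈ Finset.univ.erase l, v p x = 0
    · rw [Finset.sum_eq_zero hall, neg_zero]
      -- 0 = max(H(A) - 0, 0) forces H(A) ≤ 0
      have heq := hv.2.1 l x hx
      rw [hfl, sub_zero, ← hl0] at heq
      by_contra hpos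
      push_neg at hpos
      rw [max_eq_left hpos.le] at heq
      linarith
    · push_neg at hall
      obtain ⟨p, hpmem, hppos⟩ := hall
      have hpne : p ≠ l := (Finset.mem_erase.mp hpmem).1
      have hppos' : 0 < v p x := lt_of_le_of_ne (hv.1 p x) (Ne.symm hppos)
      have hsum : ∑ q ∈ Finset.univ.erase l, v q x = v p x := by
        refine Finset.sum_eq_single_of_mem p hpmem ?_
        intro q hq hqp
        have := hdisj x q p hqp
        rcases mul_eq_zero.mp this with h | h
        · exact h
        · exact absurd h (ne_of_gt hppos')
      rw [hsum]
      -- H(A_l) ≤ H(-A_p) = -H(A_p) = -(v p x + f p x (v p x)) ≤ -v p x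
      have hpair := hatArg_add_nonpos G v hv.1 l p (Ne.symm hpne) x
      have hmono' : H x (nbrAvg G (v l) x - ∑ q ∈ Finset.univ.erase l, nbrAvg G (v q) x)
          ≤ H x (-(nbrAvg G (v p) x - ∑ q ∈ Finset.univ.erase p, nbrAvg G (v q) x)) :=
        hHmono x (by linarith)
      rw [hHodd] at hmono'
      have heqp := sol_eq_pos G Bd H f φ v hv p x hx hppos'
      have hfp : 0 ≤ f p x (v p x) := by
        have := hfmono p x (hv.1 p x); rwa [hf0 p x] at this
      linarith
  · -- v l x > 0 : equality case
    have hsum : ∑ p ∈ Finset.univ.erase l, v p x = 0 := by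
      refine Finset.sum_eq_zero fun p hp => ?_
      have hpl : p ≠ l := (Finset.mem_erase.mp hp).1
      rcases mul_eq_zero.mp (hdisj x p l hpl) with h | h
      · exact h
      · exact absurd h (ne_of_gt hlpos)
    have hhat : hatFn v l x = v l x := by simp [hatFn, hsum]
    rw [hhat]
    exact le_of_eq (sol_eq_pos G Bd H f φ v hv l x hx hlpos).symm

end Aux

theorem max_propagation {V : Type*} {m : ℕ} [Fintype V] (G : SimpleGraph V) [DecidableRel G.Adj]
    (Bd : Set V) (H : V → ℝ → ℝ) (f : Fin m → V → ℝ → ℝ) (φ : Fin m → V → ℝ)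
    (hconn : G.Connected) (hBd : Bd.Nonempty)
    (hHmono : ∀ x : V, Monotone (H x)) (hH0 : ∀ x, H x 0 = 0)
    (hHodd : ∀ x s, H x (-s) = -H x s)
    (hfmono : ∀ l x, Monotone (f l x)) (hf0 : ∀ l x, f l x 0 = 0)
    (hfodd : ∀ l x s, f l x (-s) = -f l x s)
    (hφ : ∀ i j : Fin m, i ≠ j → ∀ x, φ i x * φ j x = 0)
    (hφnn : ∀ l x, 0 ≤ φ l x)
    (hHlip : ∀ x s t, |H x s - H x t| ≤ |s - t|)
    (u v : Fin m → V → ℝ) (hu : IsSol G Bd H f φ u) (hv : IsSol G Bd H f φ v)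
    (l₀ : Fin m) (x₀ : V) (hx₀ : x₀ ∉ Bd) (hupos : 0 < u l₀ x₀)
    (hmax : ∀ y : V, hatFn u l₀ y - hatFn v l₀ y ≤ hatFn u l₀ x₀ - hatFn v l₀ x₀)
    (hgt : 0 < hatFn u l₀ x₀ - hatFn v l₀ x₀) :
    (0 < hatFn u l₀ x₀ - hatFn v l₀ x₀ ∧
      hatFn u l₀ x₀ - hatFn v l₀ x₀ ≤
        nbrAvg G (fun y => hatFn u l₀ y - hatFn v l₀ y) x₀) ∧
    ∀ y : V, G.Adj x₀ y →
      hatFn u l₀ y - hatFn v l₀ y = hatFn u l₀ x₀ - hatFn v l₀ x₀ := by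
  set Au := nbrAvg G (u l₀) x₀ - ∑ p ∈ Finset.univ.erase l₀, nbrAvg G (u p) x₀ with hAu
  set Av := nbrAvg G (v l₀) x₀ - ∑ p ∈ Finset.univ.erase l₀, nbrAvg G (v p) x₀ with hAv
  have hudisj := sol_disjoint G Bd H f φ hHmono hH0 hfmono hf0 hφ u hu
  -- hat u at x₀ equals u l₀ x₀
  have husum : ∑ p ∈ Finset.univ.erase l₀, u p x₀ = 0 := by
    refine Finset.sum_eq_zero fun p hp => ?_
    have hpl : p ≠ l₀ := (Finset.mem_erase.mp hp).1
    rcases mul_eq_zero.mp (hudisj x₀ p l₀ hpl) with h | h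
    · exact h
    · exact absurd h (ne_of_gt hupos)
  have huhat : hatFn u l₀ x₀ = u l₀ x₀ := by simp [hatFn, husum]
  have hueq : u l₀ x₀ = H x₀ Au - f l₀ x₀ (u l₀ x₀) :=
    sol_eq_pos G Bd H f φ u hu l₀ x₀ hx₀ hupos
  -- lower bound for v
  have hvlow : H x₀ Av - f l₀ x₀ (v l₀ x₀) ≤ hatFn v l₀ x₀ :=
    sol_lower G Bd H f φ hHmono hH0 hHodd hfmono hf0 hφ v hv l₀ x₀ hx₀
  -- v l₀ x₀ ≤ u l₀ x₀
  have hvle : v l₀ x₀ ≤ u l₀ x₀ := by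
    rcases eq_or_lt_of_le (hv.1 l₀ x₀) with h | hvpos
    · linarith
    · have hvdisj := sol_disjoint G Bd H f φ hHmono hH0 hfmono hf0 hφ v hv
      have hvsum : ∑ p ∈ Finset.univ.erase l₀, v p x₀ = 0 := by
        refine Finset.sum_eq_zero fun p hp => ?_
        have hpl : p ≠ l₀ := (Finset.mem_erase.mp hp).1
        rcases mul_eq_zero.mp (hvdisj x₀ p l₀ hpl) with h | h
        · exact h
        · exact absurd h (ne_of_gt hvpos)
      have hvhat : hatFn v l₀ x₀ = v l₀ x₀ := by simp [hatFn, hvsum]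
      rw [huhat, hvhat] at hgt
      linarith
  have hfle : f l₀ x₀ (v l₀ x₀) ≤ f l₀ x₀ (u l₀ x₀) := hfmono l₀ x₀ hvle
  -- main inequality : w(x₀) ≤ H(Au) - H(Av)
  have hkey : hatFn u l₀ x₀ - hatFn v l₀ x₀ ≤ H x₀ Au - H x₀ Av := by
    rw [huhat]; linarith
  -- H(Au) > H(Av) hence Au > Av
  have hAlt : Av < Au := by
    by_contra hle
    push_neg at hle
    have := hHmono x₀ hle
    linarith
  have hlip := hHlip x₀ Au Av
  rw [abs_of_pos (by linarith : (0:ℝ) < Au - Av)] at hlip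
  have habs : H x₀ Au - H x₀ Av ≤ Au - Av := le_trans (le_abs_self _) hlip
  -- identify the average
  have havg : nbrAvg G (fun y => hatFn u l₀ y - hatFn v l₀ y) x₀ = Au - Av := by
    rw [nbrAvg_sub, nbrAvg_hat, nbrAvg_hat]
  have hmain : hatFn u l₀ x₀ - hatFn v l₀ x₀ ≤
      nbrAvg G (fun y => hatFn u l₀ y - hatFn v l₀ y) x₀ := by
    rw [havg]; linarith
  refine ⟨⟨hgt, hmain⟩, ?_⟩
  -- degree positive
  obtain ⟨b, hb⟩ := hBd
  have hxb : x₀ ≠ b := fun h => hx₀ (h ▸ hb)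
  obtain ⟨p⟩ := hconn.preconnected x₀ b
  have hdegpos : 0 < G.degree x₀ := by
    cases p with
    | nil => exact absurd rfl hxb
    | cons h _ => exact G.degree_pos_iff_exists_adj x₀ |>.mpr ⟨_, h⟩
  set w : V → ℝ := fun y => hatFn u l₀ y - hatFn v l₀ y with hw
  have hd : (0:ℝ) < (G.degree x₀ : ℝ) := by exact_mod_cast hdegpos
  have hsumge : (G.degree x₀ : ℝ) * w x₀ ≤ ∑ y ∈ G.neighborFinset x₀, w y := by
    have := hmain
    rw [show nbrAvg G (fun y => hatFn u l₀ y - hatFn v l₀ y) x₀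
        = (∑ y ∈ G.neighborFinset x₀, w y) / (G.degree x₀ : ℝ) from rfl] at this
    calc (G.degree x₀ : ℝ) * w x₀ = w x₀ * (G.degree x₀ : ℝ) := by ring
    _ ≤ ∑ y ∈ G.neighborFinset x₀, w y := by
        rw [← le_div_iff₀ hd]; exact this
  have hzero : ∑ y ∈ G.neighborFinset x₀, (w x₀ - w y) = 0 := by
    have hle : ∑ y ∈ G.neighborFinset x₀, (w x₀ - w y) ≤ 0 := by
      rw [Finset.sum_sub_distrib, Finset.sum_const, SimpleGraph.card_neighborFinset_eq_degree,
        nsmul_eq_mul]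
      linarith
    have hge : 0 ≤ ∑ y ∈ G.neighborFinset x₀, (w x₀ - w y) :=
      Finset.sum_nonneg fun y _ => by
        have := hmax y
        simp only [hw]
        linarith
    linarith
  intro y hy
  have hmem : y ∈ G.neighborFinset x₀ := (SimpleGraph.mem_neighborFinset G x₀ y).mpr hy
  have hall := (Finset.sum_eq_zero_iff_of_nonneg fun z hz => by
      have := hmax z
      simp only [hw]
      linarith).mp hzero y hmem
  have : w x₀ - w y = 0 := hall
  simp only [hw] at this
  linarith
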